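/- If w = w_1 ⋯ w_ℓ is a disjoint wreath cycle decomposition of w ∈ K ≀_Γ H with w_i = (f_i, h_i), then the order of w equals LCM(|w_1|, …, |w_ℓ|) = LCM(|[-,w_1]Yade|·|h_1|, …, |[-,w_ℓ]Yade|·|h_ℓ|). -/

import Mathlib

set_option linter.unusedSectionVars false

/-- The wreath product `K ≀_Γ Sym(Γ)` (with right-action conventions from the paper):
multiplication `(f,h)(e,g) = (f · e^{h⁻¹}, hg)` where `[γ](f·e^{h⁻¹}) = [γ]f * [γ^h]e`. -/
structure Wr (K : Type*) (Γ : Type*) where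
  base : Γ → K
  top : Equiv.Perm Γ

namespace Wr

variable {K Γ : Type*} [Group K]

theorem ext' {w v : Wr K Γ} (h1 : w.base = v.base) (h2 : w.top = v.top) : w = v := by
  cases w; cases v; cases h1; cases h2; rfl

instance : Group (Wr K Γ) where
  mul w v := ⟨fun γ => w.base γ * v.base (w.top γ), w.top.trans v.top⟩
  one := ⟨fun _ => 1, 1⟩
  inv w := ⟨fun γ => (w.base (w.top⁻¹ γ))⁻¹, w.top⁻¹⟩
  mul_assoc a b c := ext' (funext fun γ => mul_assoc _ _ _) (Equiv.trans_assoc _ _ _)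
  one_mul a := ext' (funext fun γ => one_mul _) (Equiv.refl_trans _)
  mul_one a := ext' (funext fun γ => mul_one _) (Equiv.trans_refl _)
  inv_mul_cancel a := ext' (funext fun γ => inv_mul_cancel _) (Equiv.symm_trans_self _)

/-- The support of a permutation, as a set. -/
def psupp (h : Equiv.Perm Γ) : Set Γ := {γ | h γ ≠ γ}

/-- The territory of a wreath product element. -/
def terr (w : Wr K Γ) : Set Γ := psupp w.top ∪ {γ | w.base γ ≠ 1}

/-- Wreath cycles: either trivial top and a singleton territory, or the top is a
single nontrivial cycle and the territory equals its support. -/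
def IsWreathCycle (w : Wr K Γ) : Prop :=
  (w.top = 1 ∧ ∃ γ₀, terr w = {γ₀}) ∨ (w.top.IsCycle ∧ terr w = psupp w.top)

/-- The yade of `w` at `γ`: the ordered product `∏_{i=0}^{|h|-1} [γ^{h^i}]f`. -/
noncomputable def yade (w : Wr K Γ) (γ : Γ) : K :=
  ((List.range (orderOf w.top)).map fun i => w.base ((w.top ^ i) γ)).prod

end Wr

open Wr

/-! Disjoint wreath cycles commute, and a product of elements with pairwise disjoint territories
is trivial only if every factor is; hence `(w₁ ⋯ w_ℓ) ^ n = 1` iff every `wᵢ ^ n = 1`, which gives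
the LCM. For `w = (f, h)` with `|h| = m`, the power `w ^ m` lies in the base group `K^Γ` with
coordinates the yades `[γ, w]Yade`, so `|w| = m · |[-, w]Yade|`: the yades along the cycle of `h`
are conjugate to each other and those off the territory are trivial. -/

lemma orderOf_eq_of_forall_pow_eq_one_iff {G : Type*} [Monoid G] {x : G} {c : ℕ}
    (h : ∀ n, x ^ n = 1 ↔ c ∣ n) : orderOf x = c :=
  have hdvd (n : ℕ) : orderOf x ∣ n ↔ c ∣ n := orderOf_dvd_iff_pow_eq_one.trans (h n)
  Nat.dvd_antisymm ((hdvd c).2 dvd_rfl) ((hdvd _).1 dvd_rfl)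

lemma List.foldr_lcm_dvd_iff {l : List ℕ} {n : ℕ} :
    l.foldr Nat.lcm 1 ∣ n ↔ ∀ a ∈ l, a ∣ n := by
  induction l with
  | nil => simp
  | cons a t ih => simp [Nat.lcm_dvd_iff, ih]

lemma orderOf_eq_foldr_lcm_of_forall_pow_eq_one_iff {G : Type*} [Monoid G] {x : G} {l : List G}
    (h : ∀ n, x ^ n = 1 ↔ ∀ z ∈ l, z ^ n = 1) : orderOf x = (l.map orderOf).foldr Nat.lcm 1 :=
  orderOf_eq_of_forall_pow_eq_one_iff fun n => by
    simp [h, List.foldr_lcm_dvd_iff, orderOf_dvd_iff_pow_eq_one]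

lemma Pi.orderOf_eq_orderOf_apply_of_forall_dvd {ι G : Type*} [Monoid G] {f : ι → G} {i : ι}
    (h : ∀ j, orderOf (f j) ∣ orderOf (f i)) : orderOf f = orderOf (f i) :=
  Nat.dvd_antisymm
    (orderOf_dvd_of_pow_eq_one (funext fun j => orderOf_dvd_iff_pow_eq_one.1 (h j)))
    (orderOf_apply_dvd_orderOf i)

namespace Wr

variable {K Γ : Type*} [Group K] {w v : Wr K Γ} {γ : Γ}

@[simp] lemma mul_base (w v : Wr K Γ) (γ : Γ) : (w * v).base γ = w.base γ * v.base (w.top γ) :=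
  rfl

@[simp] lemma mul_top_apply (w v : Wr K Γ) (γ : Γ) : (w * v).top γ = v.top (w.top γ) := rfl

@[simp] lemma one_base (γ : Γ) : (1 : Wr K Γ).base γ = 1 := rfl

@[simp] lemma one_top : (1 : Wr K Γ).top = 1 := rfl

@[simp] lemma inv_base (w : Wr K Γ) (γ : Γ) : w⁻¹.base γ = (w.base (w.top⁻¹ γ))⁻¹ := rfl

@[simp] lemma inv_top (w : Wr K Γ) : w⁻¹.top = w.top⁻¹ := rfl

lemma pow_top (w : Wr K Γ) (n : ℕ) : (w ^ n).top = w.top ^ n := by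
  induction n with
  | zero => rfl
  | succ n ih => rw [pow_succ, pow_succ', ← ih]; rfl

lemma pow_base (w : Wr K Γ) (n : ℕ) (γ : Γ) :
    (w ^ n).base γ = ((List.range n).map fun i => w.base ((w.top ^ i) γ)).prod := by
  induction n with
  | zero => rfl
  | succ n ih => simp [pow_succ, ih, pow_top, List.range_succ]

def ofBase : (Γ → K) →* Wr K Γ where
  toFun f := ⟨f, 1⟩
  map_one' := rfl
  map_mul' _ _ := rfl

@[simp] lemma ofBase_base (f : Γ → K) : (ofBase f).base = f := rfl

@[simp] lemma ofBase_top (f : Γ → K) : (ofBase f).top = 1 := rfl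

lemma ofBase_injective : Function.Injective (ofBase : (Γ → K) →* Wr K Γ) :=
  fun _ _ h => congrArg base h

lemma pow_orderOf_top (w : Wr K Γ) : w ^ orderOf w.top = ofBase (yade w) :=
  ext' (funext fun γ => pow_base w _ γ) (by rw [pow_top, pow_orderOf_eq_one]; rfl)

lemma orderOf_top_dvd (w : Wr K Γ) : orderOf w.top ∣ orderOf w :=
  orderOf_dvd_of_pow_eq_one (by rw [← pow_top, pow_orderOf_eq_one, one_top])

lemma orderOf_eq_orderOf_top_mul [Finite Γ] (w : Wr K Γ) :
    orderOf w = orderOf w.top * orderOf (yade w) := by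
  have h := orderOf_pow_of_dvd (orderOf_pos w.top).ne' (orderOf_top_dvd w)
  rw [pow_orderOf_top, orderOf_injective _ ofBase_injective] at h
  rw [h, Nat.mul_div_cancel' (orderOf_top_dvd w)]

/-- Compare the `γ`-coordinates of `w * w ^ m = w ^ m * w`, where `m = orderOf w.top` and
`w ^ m = ofBase (yade w)`. -/
lemma semiconjBy_yade_top_apply (w : Wr K Γ) (γ : Γ) :
    SemiconjBy (w.base γ) (yade w (w.top γ)) (yade w γ) := by
  have h := congrArg (fun u => u.base γ) (Commute.self_pow w (orderOf w.top)).eq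
  simpa [pow_orderOf_top, SemiconjBy] using h

lemma orderOf_yade_top_pow_apply (w : Wr K Γ) (γ : Γ) (k : ℕ) :
    orderOf (yade w ((w.top ^ k) γ)) = orderOf (yade w γ) := by
  induction k with
  | zero => rfl
  | succ k ih =>
    rw [pow_succ', Equiv.Perm.mul_apply, (semiconjBy_yade_top_apply w _).orderOf_eq, ih]

lemma notMem_terr_iff : γ ∉ terr w ↔ w.top γ = γ ∧ w.base γ = 1 := by
  simp [terr, psupp]

lemma top_apply_mem_terr_iff : w.top γ ∈ terr w ↔ γ ∈ terr w := by
  constructor <;> intro h <;> by_contra hn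
  · rw [(notMem_terr_iff.1 hn).1] at h
    exact hn h
  · rw [w.top.injective (notMem_terr_iff.1 hn).1] at hn
    exact hn h

@[simp] lemma terr_one : terr (1 : Wr K Γ) = ∅ := by
  simp [terr, psupp]

lemma terr_mul_subset (w v : Wr K Γ) : terr (w * v) ⊆ terr w ∪ terr v := by
  intro γ hγ
  by_contra h
  simp only [Set.mem_union, not_or, notMem_terr_iff] at h
  exact notMem_terr_iff.2 (by simp [h]) hγ

lemma terr_pow_subset (w : Wr K Γ) (n : ℕ) : terr (w ^ n) ⊆ terr w := by
  induction n with
  | zero => simp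
  | succ n ih => rw [pow_succ]; exact (terr_mul_subset _ _).trans (Set.union_subset ih le_rfl)

lemma terr_inv_subset (w : Wr K Γ) : terr w⁻¹ ⊆ terr w := by
  intro γ hγ
  by_contra h
  obtain ⟨htop, hbase⟩ := notMem_terr_iff.1 h
  have htop' : w.top⁻¹ γ = γ := by rw [Equiv.Perm.inv_eq_iff_eq, htop]
  exact notMem_terr_iff.2 (by simp [htop', hbase]) hγ

lemma terr_inv (w : Wr K Γ) : terr w⁻¹ = terr w :=
  (terr_inv_subset w).antisymm (by simpa using terr_inv_subset w⁻¹)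

lemma eq_one_of_terr_eq_empty (h : terr w = ∅) : w = 1 :=
  ext' (funext fun γ => (notMem_terr_iff.1 (h ▸ Set.notMem_empty γ)).2)
    (Equiv.ext fun γ => (notMem_terr_iff.1 (h ▸ Set.notMem_empty γ)).1)

lemma yade_eq_one_of_notMem_terr (h : γ ∉ terr w) : yade w γ = 1 := by
  have h' : γ ∉ terr (w ^ orderOf w.top) := fun hγ => h (terr_pow_subset _ _ hγ)
  rw [pow_orderOf_top] at h'
  exact (notMem_terr_iff.1 h').2

lemma orderOf_yade_apply_dvd [Finite Γ] (hw : IsWreathCycle w) (hγ : γ ∈ terr w) (δ : Γ) :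
    orderOf (yade w δ) ∣ orderOf (yade w γ) := by
  by_cases hδ : δ ∈ terr w
  · rcases hw with ⟨-, γ₀, hterr⟩ | ⟨hcycle, hterr⟩
    · rw [hterr, Set.mem_singleton_iff] at hδ hγ
      rw [hδ, hγ]
    · rw [hterr] at hδ hγ
      obtain ⟨k, rfl⟩ := hcycle.exists_pow_eq hγ hδ
      rw [orderOf_yade_top_pow_apply]
  · rw [yade_eq_one_of_notMem_terr hδ, orderOf_one]
    exact one_dvd _

lemma mul_base_top_eq_of_notMem_terr (hγ : γ ∉ terr v) (hwγ : w.top γ ∉ terr v) :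
    (w * v).base γ = (v * w).base γ ∧ (w * v).top γ = (v * w).top γ := by
  rw [notMem_terr_iff] at hγ hwγ
  simp [hγ, hwγ]

lemma top_apply_mem_terr_iff_of_disjoint (h : Disjoint (terr w) (terr v)) :
    w.top γ ∈ terr v ↔ γ ∈ terr v := by
  by_cases hγ : γ ∈ terr w
  · exact iff_of_false (h.notMem_of_mem_left (top_apply_mem_terr_iff.2 hγ))
      (h.notMem_of_mem_left hγ)
  · rw [(notMem_terr_iff.1 hγ).1]

lemma commute_of_disjoint (h : Disjoint (terr w) (terr v)) : Commute w v := by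
  have key (γ : Γ) : (w * v).base γ = (v * w).base γ ∧ (w * v).top γ = (v * w).top γ := by
    by_cases hγ : γ ∈ terr v
    · have hw : γ ∉ terr w := h.notMem_of_mem_right hγ
      obtain ⟨hbase, htop⟩ := mul_base_top_eq_of_notMem_terr hw
        ((top_apply_mem_terr_iff_of_disjoint h.symm).not.2 hw)
      exact ⟨hbase.symm, htop.symm⟩
    · exact mul_base_top_eq_of_notMem_terr hγ ((top_apply_mem_terr_iff_of_disjoint h).not.2 hγ)
  exact ext' (funext fun γ => (key γ).1) (Equiv.ext fun γ => (key γ).2)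

/-- If `w * v = 1` then `v = w⁻¹` has the same territory as `w`, which is disjoint from itself. -/
lemma eq_one_of_mul_eq_one_of_disjoint (h : Disjoint (terr w) (terr v)) (hwv : w * v = 1) :
    w = 1 := by
  rw [eq_inv_of_mul_eq_one_right hwv, terr_inv, disjoint_self] at h
  exact eq_one_of_terr_eq_empty h

variable {l : List (Wr K Γ)}

lemma disjoint_terr_list_prod {s : Set Γ} (h : ∀ z ∈ l, Disjoint s (terr z)) :
    Disjoint s (terr l.prod) := by
  induction l with
  | nil => simp
  | cons a t ih =>
    rw [List.forall_mem_cons] at h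
    exact (Set.disjoint_union_right.2 ⟨h.1, ih h.2⟩).mono_right (terr_mul_subset _ _)

lemma forall_eq_one_of_list_prod_eq_one (hd : l.Pairwise fun z v => Disjoint (terr z) (terr v))
    (h : l.prod = 1) : ∀ z ∈ l, z = 1 := by
  induction l with
  | nil => simp
  | cons a t ih =>
    rw [List.pairwise_cons] at hd
    have ha := eq_one_of_mul_eq_one_of_disjoint (disjoint_terr_list_prod hd.1) h
    rw [List.prod_cons, ha, one_mul] at h
    exact List.forall_mem_cons.2 ⟨ha, ih hd.2 h⟩

lemma list_prod_pow (hd : l.Pairwise fun z v => Disjoint (terr z) (terr v)) (n : ℕ) :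
    l.prod ^ n = (l.map (· ^ n)).prod := by
  induction l with
  | nil => simp
  | cons a t ih =>
    rw [List.pairwise_cons] at hd
    have hcomm : Commute a t.prod :=
      Commute.list_prod_right _ _ fun v hv => commute_of_disjoint (hd.1 v hv)
    rw [List.prod_cons, hcomm.mul_pow, ih hd.2, List.map_cons, List.prod_cons]

lemma list_prod_pow_eq_one_iff (hd : l.Pairwise fun z v => Disjoint (terr z) (terr v)) (n : ℕ) :
    l.prod ^ n = 1 ↔ ∀ z ∈ l, z ^ n = 1 := by
  rw [list_prod_pow hd]
  refine ⟨fun h z hz => ?_, fun h => List.prod_eq_one (by simpa using h)⟩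
  have hd' : (l.map (· ^ n)).Pairwise fun z v => Disjoint (terr z) (terr v) :=
    List.pairwise_map.2 (hd.imp fun h => h.mono (terr_pow_subset _ n) (terr_pow_subset _ n))
  exact forall_eq_one_of_list_prod_eq_one hd' h _ (List.mem_map_of_mem hz)

end Wr

theorem orderOf_wreathCycle_decomposition_general {K Γ : Type*} [Group K] [Fintype Γ]
    (l : List (Wr K Γ))
    (hc : ∀ z ∈ l, IsWreathCycle z)
    (hd : l.Pairwise fun z v => Disjoint (terr z) (terr v)) :
    orderOf l.prod = (l.map fun z => orderOf z).foldr Nat.lcm 1 ∧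
      ∀ z ∈ l, ∀ γ ∈ terr z, orderOf z = orderOf (yade z γ) * orderOf z.top := by
  refine ⟨orderOf_eq_foldr_lcm_of_forall_pow_eq_one_iff (list_prod_pow_eq_one_iff hd),
    fun z hz γ hγ => ?_⟩
  rw [orderOf_eq_orderOf_top_mul,
    Pi.orderOf_eq_orderOf_apply_of_forall_dvd (orderOf_yade_apply_dvd (hc z hz) hγ), mul_comm]

/-- if `w = w₁ ⋯ w_ℓ` is a disjoint wreath cycle decomposition, then
`|w| = LCM(|w₁|,…,|w_ℓ|)` and each `|wᵢ| = |[-,wᵢ]Yade| · |hᵢ|`. -/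
theorem orderOf_wreathCycle_decomposition {K Γ : Type*} [Group K] [Fintype Γ]
    (H : Subgroup (Equiv.Perm Γ)) (l : List (Wr K Γ))
    (hc : ∀ z ∈ l, IsWreathCycle z)
    (hd : l.Pairwise fun z v => Disjoint (terr z) (terr v))
    (hH : l.prod.top ∈ H) :
    orderOf l.prod = (l.map fun z => orderOf z).foldr Nat.lcm 1 ∧
      ∀ z ∈ l, ∀ γ ∈ terr z, orderOf z = orderOf (yade z γ) * orderOf z.top :=
  orderOf_wreathCycle_decomposition_general l hc hd
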